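/- arXiv:2307.05312 — 7 statements merged into one kernel-verified Lean document; each statement's English description precedes it below -/
import Mathlib

section
/- Let A, B, D be symmetric 3×3 real matrices with A, D, A − 3·B·D⁻¹·B and D − 3·B·A⁻¹·B invertible, h > 0, and let U, V, W ∈ ℝ³. With 𝒜 = (A − 3·B·D⁻¹·B)⁻¹, ℬ = −3·𝒜·B·D⁻¹, 𝒟 = (D − 3·B·A⁻¹·B)⁻¹, v₁ = (2/h)·(ℬᵀ·U + 3·𝒟·V) and v₂ = (h/6)·(3·𝒜·V + ℬ·W), one has v₂ = (h²/12)·𝒜·( 𝒟⁻¹·v₁ + (6/h)·B·(A⁻¹·U − D⁻¹·W) ). In particular the compliance thermoelastic tensors u, v₁, v₂, w are not independent: v₂ is determined by v₁, U and W. -/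
/-!
The push-through identity `(D - 3 B A⁻¹ B) D⁻¹ B = B A⁻¹ (A - 3 B D⁻¹ B)` together with the
symmetry of `𝒜` (so `ℬᵀ = -3 D⁻¹ B 𝒜`) gives `𝒟⁻¹ ℬᵀ = -3 B A⁻¹`, hence
`𝒟⁻¹ v₁ = (6/h) (V - B A⁻¹ U)`. The `B A⁻¹ U` terms then cancel, and both sides equal
`(h/2) 𝒜 (V - B D⁻¹ W)`.
-/

open Matrix

namespace Matrix

variable {n α : Type*} [Fintype n]

theorem IsSymm.mul_mul_self [CommSemiring α] {B C : Matrix n n α} (hB : B.IsSymm)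
    (hC : C.IsSymm) : (B * C * B).IsSymm := by
  simp only [IsSymm, transpose_mul, hB.eq, hC.eq, Matrix.mul_assoc]

variable [DecidableEq n] [CommRing α]

theorem schur_mul_inv_mul {A B D : Matrix n n α} (hA : IsUnit A.det) (hD : IsUnit D.det)
    (c : α) :
    (D - c • (B * A⁻¹ * B)) * (D⁻¹ * B) = B * A⁻¹ * (A - c • (B * D⁻¹ * B)) := by
  simp only [Matrix.sub_mul, Matrix.mul_sub, Matrix.smul_mul, Matrix.mul_smul, Matrix.mul_assoc,
    mul_nonsing_inv_cancel_left _ _ hD, nonsing_inv_mul _ hA, Matrix.mul_one]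

theorem schur_mul_inv_mul_inv_schur {A B D : Matrix n n α} (hA : IsUnit A.det)
    (hD : IsUnit D.det) (c : α) (hS : IsUnit (A - c • (B * D⁻¹ * B)).det) :
    (D - c • (B * A⁻¹ * B)) * (D⁻¹ * B * (A - c • (B * D⁻¹ * B))⁻¹) = B * A⁻¹ := by
  rw [← Matrix.mul_assoc, schur_mul_inv_mul hA hD, Matrix.mul_assoc, mul_nonsing_inv _ hS,
    Matrix.mul_one]

end Matrix

theorem thermoelastic_compliance_v2_determined_by_v1_general
    (A B D : Matrix (Fin 3) (Fin 3) ℝ)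
    (hA : A.IsSymm) (hB : B.IsSymm) (hD : D.IsSymm)
    (hAinv : IsUnit A.det) (hDinv : IsUnit D.det)
    (h1 : IsUnit (A - (3 : ℝ) • (B * D⁻¹ * B)).det)
    (h2 : IsUnit (D - (3 : ℝ) • (B * A⁻¹ * B)).det)
    (h : ℝ) (U V W : Fin 3 → ℝ) :
    let calA := (A - (3 : ℝ) • (B * D⁻¹ * B))⁻¹
    let calB := (-3 : ℝ) • (calA * B * D⁻¹)
    let calD := (D - (3 : ℝ) • (B * A⁻¹ * B))⁻¹
    let v₁ := (2 / h) • (calB.transpose.mulVec U + (3 : ℝ) • calD.mulVec V)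
    let v₂ := (h / 6) • ((3 : ℝ) • calA.mulVec V + calB.mulVec W)
    v₂ = (h ^ 2 / 12) • calA.mulVec
      (calD⁻¹.mulVec v₁ + (6 / h) • B.mulVec (A⁻¹.mulVec U - D⁻¹.mulVec W)) := by
  intro calA calB calD v₁ v₂
  have hcalA : calA.IsSymm := (hA.sub ((hB.mul_mul_self hD.inv).smul 3)).inv
  have hcalBt : calBᵀ = (-3 : ℝ) • (D⁻¹ * B * calA) := by
    simp only [calB, transpose_smul, transpose_mul, hcalA.eq, hB.eq, hD.inv.eq, Matrix.mul_assoc]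
  have hcalD_calBt : calD⁻¹ * calBᵀ = (-3 : ℝ) • (B * A⁻¹) := by
    rw [hcalBt, nonsing_inv_nonsing_inv _ h2, Matrix.mul_smul,
      schur_mul_inv_mul_inv_schur hAinv hDinv 3 h1]
  have hcalD : calD⁻¹ * calD = 1 := nonsing_inv_mul _ (isUnit_nonsing_inv_det _ h2)
  have hv₁ : calD⁻¹ *ᵥ v₁ = (6 / h) • (V - B *ᵥ A⁻¹ *ᵥ U) := by
    simp only [v₁, mulVec_smul, mulVec_add, mulVec_mulVec, hcalD_calBt, hcalD, one_mulVec,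
      smul_mulVec]
    match_scalars <;> ring
  have hinner : calD⁻¹ *ᵥ v₁ + (6 / h) • B *ᵥ (A⁻¹ *ᵥ U - D⁻¹ *ᵥ W)
      = (6 / h) • (V - B *ᵥ D⁻¹ *ᵥ W) := by
    rw [hv₁, ← smul_add, mulVec_sub, sub_add_sub_cancel]
  have hscale : h ^ 2 / 12 * (6 / h) = h / 2 := by field_simp; ring
  rw [hinner, mulVec_smul, smul_smul, hscale]
  simp only [v₂, calB, mulVec_sub, smul_mulVec, mulVec_mulVec, Matrix.mul_assoc]
  match_scalars <;> ring

theorem thermoelastic_compliance_v2_determined_by_v1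
    (A B D : Matrix (Fin 3) (Fin 3) ℝ)
    (hA : A.IsSymm) (hB : B.IsSymm) (hD : D.IsSymm)
    (hAinv : IsUnit A.det) (hDinv : IsUnit D.det)
    (h1 : IsUnit (A - (3 : ℝ) • (B * D⁻¹ * B)).det)
    (h2 : IsUnit (D - (3 : ℝ) • (B * A⁻¹ * B)).det)
    (h : ℝ) (hh : 0 < h) (U V W : Fin 3 → ℝ) :
    let calA := (A - (3 : ℝ) • (B * D⁻¹ * B))⁻¹
    let calB := (-3 : ℝ) • (calA * B * D⁻¹)
    let calD := (D - (3 : ℝ) • (B * A⁻¹ * B))⁻¹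
    let v₁ := (2 / h) • (calB.transpose.mulVec U + (3 : ℝ) • calD.mulVec V)
    let v₂ := (h / 6) • ((3 : ℝ) • calA.mulVec V + calB.mulVec W)
    v₂ = (h ^ 2 / 12) • calA.mulVec
      (calD⁻¹.mulVec v₁ + (6 / h) • B.mulVec (A⁻¹.mulVec U - D⁻¹.mulVec W)) :=
  thermoelastic_compliance_v2_determined_by_v1_general A B D hA hB hD hAinv hDinv h1 h2 h U V W
end

section
/- Let n ≥ 1, let δ : {1,…,n} → ℝ be ply orientation angles, let b_k = (2k − n − 1)/n², and let R₁, R_γ, Φ₁, Φ_γ be reals with R₁ ≠ 0. Set ζ = Σ_{k=1}^n b_k·exp(2·i·δ_k) ∈ ℂ. If R₁·exp(2·i·Φ₁)·ζ = 0 (so that the anisotropic polar component R₁ᴮ·exp(2iΦ₁ᴮ) of the elastic coupling tensor B vanishes), then R_γ·exp(2·i·Φ_γ)·ζ = 0; consequently, since T^V = 0, all Cartesian components of the thermoelastic coupling tensor V, namely V₁(θ) = Re(R_γ·e^{2iΦ_γ}·ζ·e^{−2iθ}), V₂(θ) = −Re(R_γ·e^{2iΦ_γ}·ζ·e^{−2iθ}),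 V₆(θ) = √2·Im(R_γ·e^{2iΦ_γ}·ζ·e^{−2iθ}), vanish for every θ. In words: for a laminate of identical plies, elastic uncoupling (B = O) implies thermal uncoupling (V = O). -/
open Complex

theorem Complex.eq_zero_of_ofReal_mul_exp_mul_eq_zero {R : ℝ} {w ζ : ℂ} (hR : R ≠ 0)
    (h : (R : ℂ) * exp w * ζ = 0) : ζ = 0 := by
  simpa [hR, exp_ne_zero] using h

theorem identical_plies_elastic_uncoupling_implies_thermal_uncoupling_general
    (n : ℕ) (δ : Fin n → ℝ)
    (R₁ Rγ Φ₁ Φγ : ℝ) (hR₁ : R₁ ≠ 0) :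
    let b : Fin n → ℝ := fun k => (2 * (((k : ℕ) : ℝ) + 1) - (n : ℝ) - 1) / (n : ℝ) ^ 2
    let ζ : ℂ := ∑ k, (b k : ℂ) * Complex.exp (2 * Complex.I * ((δ k : ℝ) : ℂ))
    (R₁ : ℂ) * Complex.exp (2 * Complex.I * ((Φ₁ : ℝ) : ℂ)) * ζ = 0 →
      ((Rγ : ℂ) * Complex.exp (2 * Complex.I * ((Φγ : ℝ) : ℂ)) * ζ = 0 ∧
        ∀ θ : ℝ,
          ((Rγ : ℂ) * Complex.exp (2 * Complex.I * ((Φγ : ℝ) : ℂ)) * ζ *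
            Complex.exp (-2 * Complex.I * (θ : ℂ))).re = 0 ∧
          -((Rγ : ℂ) * Complex.exp (2 * Complex.I * ((Φγ : ℝ) : ℂ)) * ζ *
            Complex.exp (-2 * Complex.I * (θ : ℂ))).re = 0 ∧
          Real.sqrt 2 * ((Rγ : ℂ) * Complex.exp (2 * Complex.I * ((Φγ : ℝ) : ℂ)) * ζ *
            Complex.exp (-2 * Complex.I * (θ : ℂ))).im = 0) := by
  intro b ζ hB
  have hζ : ζ = 0 := eq_zero_of_ofReal_mul_exp_mul_eq_zero hR₁ hB
  simp [hζ]

theorem identical_plies_elastic_uncoupling_implies_thermal_uncoupling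
    (n : ℕ) (hn : 1 ≤ n) (δ : Fin n → ℝ)
    (R₁ Rγ Φ₁ Φγ : ℝ) (hR₁ : R₁ ≠ 0) :
    let b : Fin n → ℝ := fun k => (2 * (((k : ℕ) : ℝ) + 1) - (n : ℝ) - 1) / (n : ℝ) ^ 2
    let ζ : ℂ := ∑ k, (b k : ℂ) * Complex.exp (2 * Complex.I * ((δ k : ℝ) : ℂ))
    (R₁ : ℂ) * Complex.exp (2 * Complex.I * ((Φ₁ : ℝ) : ℂ)) * ζ = 0 →
      ((Rγ : ℂ) * Complex.exp (2 * Complex.I * ((Φγ : ℝ) : ℂ)) * ζ = 0 ∧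
        ∀ θ : ℝ,
          ((Rγ : ℂ) * Complex.exp (2 * Complex.I * ((Φγ : ℝ) : ℂ)) * ζ *
            Complex.exp (-2 * Complex.I * (θ : ℂ))).re = 0 ∧
          -((Rγ : ℂ) * Complex.exp (2 * Complex.I * ((Φγ : ℝ) : ℂ)) * ζ *
            Complex.exp (-2 * Complex.I * (θ : ℂ))).re = 0 ∧
          Real.sqrt 2 * ((Rγ : ℂ) * Complex.exp (2 * Complex.I * ((Φγ : ℝ) : ℂ)) * ζ *
            Complex.exp (-2 * Complex.I * (θ : ℂ))).im = 0) :=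
  identical_plies_elastic_uncoupling_implies_thermal_uncoupling_general n δ R₁ Rγ Φ₁ Φγ hR₁
end

section
/- Let A, B be symmetric 3×3 real matrices with A and A − 3·B·A⁻¹·B invertible. Set 𝒮 = (A − 3·B·A⁻¹·B)⁻¹ and ℬ = −3·𝒮·B·A⁻¹. Then: (1) ℬ is symmetric (ℬᵀ = ℬ); and (2) for any U, V ∈ ℝ³, 𝒮·U + ℬ·V = ℬᵀ·V + 𝒮·U. In words: for a quasi-homogeneous laminate (D = A), the compliance tensors satisfy 𝒜 = 𝒟 and ℬ = ℬᵀ, and if moreover W = U then the compliance thermoelastic tensors satisfy u = w: quasi-homogeneity holds for stiffness and compliance, for both elastic and thermal responses. -/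
/-!
Put `M = A - 3 B A⁻¹ B`, so that `𝒮 = M⁻¹`. Expanding both sides shows
`M (A⁻¹ B) = (B A⁻¹) M`, and inverting `M` turns this into `𝒮 B A⁻¹ = A⁻¹ B 𝒮`. Since `A`, `B`,
hence `M` and `𝒮`, are symmetric, the right-hand side is the transpose of the left-hand side, so
`ℬ = -3 𝒮 B A⁻¹` is symmetric; the identity for the thermoelastic tensors then follows at once.
-/

open Matrix

namespace Matrix

variable {n K : Type*} [Fintype n] [DecidableEq n] [CommRing K]

theorem SemiconjBy.nonsing_inv_symm_left {M X Y : Matrix n n K} (hM : IsUnit M.det)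
    (h : SemiconjBy M X Y) : SemiconjBy M⁻¹ Y X := calc
  M⁻¹ * Y = M⁻¹ * (Y * M) * M⁻¹ := by
    rw [mul_assoc, mul_assoc, mul_nonsing_inv M hM, mul_one]
  _ = X * M⁻¹ := by
    rw [← h.eq, ← mul_assoc, nonsing_inv_mul M hM, one_mul]

theorem semiconjBy_sub_smul_mul_nonsing_inv_mul {A : Matrix n n K} (hA : IsUnit A.det)
    (B : Matrix n n K) (c : K) :
    SemiconjBy (A - c • (B * A⁻¹ * B)) (A⁻¹ * B) (B * A⁻¹) := by
  rw [SemiconjBy, sub_mul, mul_sub, mul_nonsing_inv_cancel_left A B hA,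
    nonsing_inv_mul_cancel_right A B hA, Matrix.smul_mul, Matrix.mul_smul]
  simp only [mul_assoc]

theorem IsSymm.sub_smul_mul_nonsing_inv_mul {A B : Matrix n n K} (hA : A.IsSymm) (hB : B.IsSymm)
    (c : K) : (A - c • (B * A⁻¹ * B)).IsSymm := by
  refine hA.sub (IsSymm.smul ?_ c)
  simp only [IsSymm, transpose_mul, hA.inv.eq, hB.eq, mul_assoc]

theorem IsSymm.nonsing_inv_sub_smul_mul_mul_nonsing_inv {A B : Matrix n n K} (hA : A.IsSymm)
    (hB : B.IsSymm) (hAinv : IsUnit A.det) (c : K)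
    (hM : IsUnit (A - c • (B * A⁻¹ * B)).det) :
    ((A - c • (B * A⁻¹ * B))⁻¹ * B * A⁻¹).IsSymm := by
  have hS := (hA.sub_smul_mul_nonsing_inv_mul hB c).inv
  have hsemiconj := ((semiconjBy_sub_smul_mul_nonsing_inv_mul hAinv B c).nonsing_inv_symm_left hM).eq
  rw [IsSymm, transpose_mul, transpose_mul, hA.inv.eq, hB.eq, hS.eq, ← mul_assoc, ← hsemiconj,
    ← mul_assoc]

end Matrix

theorem quasi_homogeneous_compliance_symmetric
    (A B : Matrix (Fin 3) (Fin 3) ℝ)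
    (hA : A.IsSymm) (hB : B.IsSymm)
    (hAinv : IsUnit A.det)
    (hSinv : IsUnit (A - (3 : ℝ) • (B * A⁻¹ * B)).det) :
    let S := (A - (3 : ℝ) • (B * A⁻¹ * B))⁻¹
    let calB := (-3 : ℝ) • (S * B * A⁻¹)
    calB.transpose = calB ∧
      ∀ U V : Fin 3 → ℝ,
        S.mulVec U + calB.mulVec V = calB.transpose.mulVec V + S.mulVec U := by
  intro S calB
  have hcalB : calB.transpose = calB :=
    (IsSymm.nonsing_inv_sub_smul_mul_mul_nonsing_inv hA hB hAinv 3 hSinv).smul (-3 : ℝ)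
  exact ⟨hcalB, fun U V => by rw [hcalB, add_comm]⟩
end

section
/- Let T₀, T₁, R₀ᴬ, R₀ᴮ, R₀ᴰ, T_γ ∈ ℝ with T₁ ≠ 0, let h > 0, let ε ∈ {−1, 1}, and define A = [[T₀+2T₁+R₀ᴬ, −T₀+2T₁−R₀ᴬ, 0], [−T₀+2T₁−R₀ᴬ, T₀+2T₁+R₀ᴬ, 0], [0, 0, 2(T₀−R₀ᴬ)]], D the same matrix with R₀ᴰ in place of R₀ᴬ, B = [[R₀ᴮ, −R₀ᴮ, 0], [−R₀ᴮ, R₀ᴮ, 0], [0, 0, −2R₀ᴮ]], U = W = (T_γ, T_γ, 0), V = (0, 0, 0). Assume A, D, A − 3·B·D⁻¹·B and D − 3·B·A⁻¹·B are invertible. Then the compliance thermoelastic tensors satisfy u = w = (T_γ/(4T₁))·(1, 1, 0) and v₁ = v₂ = (0, 0, 0). In words: a coupled laminate with R₁ᴬ = R₁ᴰ = R₁ᴮ = 0 is a warp- and extension-free thermally stable laminate, with isotropic coefficients of thermal expansion and curvature even though B ≠ O. -/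
/-!
With all second-harmonic moduli zero, every polar stiffness tensor maps the isotropic strain
`(1, 1, 0)` to `4 T₁ (1, 1, 0)`; for `B` this is `0`, since its isotropic moduli vanish. Hence
`x = T_γ / (4 T₁) • (1, 1, 0)` solves `A x = U`, `D x = W` and `B x = 0`. Every Schur-complement
correction `B P B` then annihilates `x`, so `𝒜 U = 𝒟 W = x`, while `ℬ W` and `ℬᵀ U` both pass
through `B x = 0` (the latter using the symmetry of `𝒜`).
-/

open Matrix

section SchurComplement

variable {n α : Type*} [Fintype n] [CommRing α]

theorem Matrix.IsSymm.mul_mul_self_s14 {B P : Matrix n n α} (hB : B.IsSymm) (hP : P.IsSymm) :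
    (B * P * B).IsSymm := by
  simp only [IsSymm, transpose_mul, hB.eq, hP.eq, mul_assoc]

theorem Matrix.sub_smul_mul_mul_mulVec_of_mulVec_eq_zero (A B P : Matrix n n α) (c : α)
    {x : n → α} (hBx : B *ᵥ x = 0) : (A - c • (B * P * B)) *ᵥ x = A *ᵥ x := by
  rw [sub_mulVec, smul_mulVec, ← mulVec_mulVec, hBx, mulVec_zero, smul_zero, sub_zero]

variable [DecidableEq n]

theorem Matrix.nonsing_inv_mulVec_of_mulVec_eq {M : Matrix n n α} (hM : IsUnit M.det)
    {x y : n → α} (h : M *ᵥ x = y) : M⁻¹ *ᵥ y = x := by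
  rw [← h, mulVec_mulVec, nonsing_inv_mul _ hM, one_mulVec]

theorem Matrix.mul_mul_nonsing_inv_mulVec_eq_zero (C B D : Matrix n n α) (hD : IsUnit D.det)
    {x : n → α} (hBx : B *ᵥ x = 0) : (C * B * D⁻¹) *ᵥ (D *ᵥ x) = 0 := by
  rw [mul_assoc, ← mulVec_mulVec, ← mulVec_mulVec, nonsing_inv_mulVec_of_mulVec_eq hD rfl, hBx,
    mulVec_zero]

theorem Matrix.transpose_mul_mul_nonsing_inv_mulVec_eq_zero {C B : Matrix n n α}
    (D : Matrix n n α) (hC : C.IsSymm) (hB : B.IsSymm) {x y : n → α}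
    (hCy : C *ᵥ y = x) (hBx : B *ᵥ x = 0) :
    (C * B * D⁻¹)ᵀ *ᵥ y = 0 := by
  rw [transpose_mul, transpose_mul, hC.eq, hB.eq, ← mulVec_mulVec, ← mulVec_mulVec, hCy, hBx,
    mulVec_zero]

end SchurComplement

def polarStiffness (T₀ T₁ R₀ : ℝ) : Matrix (Fin 3) (Fin 3) ℝ :=
  !![T₀ + 2*T₁ + R₀, -T₀ + 2*T₁ - R₀, 0;
     -T₀ + 2*T₁ - R₀, T₀ + 2*T₁ + R₀, 0;
     0, 0, 2*(T₀ - R₀)]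

theorem polarStiffness_isSymm (T₀ T₁ R₀ : ℝ) : (polarStiffness T₀ T₁ R₀).IsSymm := by
  refine IsSymm.ext fun i j => ?_
  fin_cases i <;> fin_cases j <;> simp [polarStiffness]

theorem polarStiffness_mulVec_isotropic (T₀ T₁ R₀ c : ℝ) :
    polarStiffness T₀ T₁ R₀ *ᵥ (c • ![1, 1, 0]) = ![4 * T₁ * c, 4 * T₁ * c, 0] := by
  ext i
  fin_cases i <;> simp [polarStiffness, mulVec, dotProduct, Fin.sum_univ_three] <;> ring

theorem warp_and_extension_free_thermally_stable_general
    (T₀ T₁ R₀A R₀B R₀D Tγ : ℝ) (hT₁ : T₁ ≠ 0) (h : ℝ) :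
    let A : Matrix (Fin 3) (Fin 3) ℝ :=
      !![T₀ + 2*T₁ + R₀A, -T₀ + 2*T₁ - R₀A, 0;
         -T₀ + 2*T₁ - R₀A, T₀ + 2*T₁ + R₀A, 0;
         0, 0, 2*(T₀ - R₀A)]
    let D : Matrix (Fin 3) (Fin 3) ℝ :=
      !![T₀ + 2*T₁ + R₀D, -T₀ + 2*T₁ - R₀D, 0;
         -T₀ + 2*T₁ - R₀D, T₀ + 2*T₁ + R₀D, 0;
         0, 0, 2*(T₀ - R₀D)]
    let B : Matrix (Fin 3) (Fin 3) ℝ :=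
      !![R₀B, -R₀B, 0; -R₀B, R₀B, 0; 0, 0, -2*R₀B]
    let U : Fin 3 → ℝ := ![Tγ, Tγ, 0]
    let W : Fin 3 → ℝ := ![Tγ, Tγ, 0]
    let V : Fin 3 → ℝ := 0
    let calA := (A - (3 : ℝ) • (B * D⁻¹ * B))⁻¹
    let calB := (-3 : ℝ) • (calA * B * D⁻¹)
    let calD := (D - (3 : ℝ) • (B * A⁻¹ * B))⁻¹
    let u := calA.mulVec U + calB.mulVec V
    let v₁ := (2 / h) • (calB.transpose.mulVec U + (3 : ℝ) • calD.mulVec V)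
    let v₂ := (h / 6) • ((3 : ℝ) • calA.mulVec V + calB.mulVec W)
    let w := calB.transpose.mulVec V + calD.mulVec W
    IsUnit A.det → IsUnit D.det →
    IsUnit (A - (3 : ℝ) • (B * D⁻¹ * B)).det →
    IsUnit (D - (3 : ℝ) • (B * A⁻¹ * B)).det →
      (u = (Tγ / (4 * T₁)) • (![1, 1, 0] : Fin 3 → ℝ) ∧
        w = (Tγ / (4 * T₁)) • (![1, 1, 0] : Fin 3 → ℝ) ∧
        v₁ = 0 ∧ v₂ = 0) := by
  intro A D B U W V calA calB calD u v₁ v₂ w _ hD hM hN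
  set x : Fin 3 → ℝ := (Tγ / (4 * T₁)) • ![1, 1, 0]
  have hscale : 4 * T₁ * (Tγ / (4 * T₁)) = Tγ := by field_simp
  have hApolar : A = polarStiffness T₀ T₁ R₀A := rfl
  have hDpolar : D = polarStiffness T₀ T₁ R₀D := rfl
  have hBpolar : B = polarStiffness 0 0 R₀B := by
    ext i j; fin_cases i <;> fin_cases j <;> simp [B, polarStiffness]
  have hAx : A *ᵥ x = U := by rw [hApolar, polarStiffness_mulVec_isotropic, hscale]
  have hDx : D *ᵥ x = W := by rw [hDpolar, polarStiffness_mulVec_isotropic, hscale]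
  have hBx : B *ᵥ x = 0 := by
    rw [hBpolar, polarStiffness_mulVec_isotropic]; ext i; fin_cases i <;> simp
  have hBsymm : B.IsSymm := hBpolar ▸ polarStiffness_isSymm _ _ _
  have hcalAsymm : calA.IsSymm :=
    ((hApolar ▸ polarStiffness_isSymm _ _ _).sub
      ((hBsymm.mul_mul_self_s14 (hDpolar ▸ polarStiffness_isSymm _ _ _).inv).smul _)).inv
  have hcalAU : calA *ᵥ U = x := nonsing_inv_mulVec_of_mulVec_eq hM <| by
    rw [sub_smul_mul_mul_mulVec_of_mulVec_eq_zero _ _ _ _ hBx, hAx]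
  have hcalDW : calD *ᵥ W = x := nonsing_inv_mulVec_of_mulVec_eq hN <| by
    rw [sub_smul_mul_mul_mulVec_of_mulVec_eq_zero _ _ _ _ hBx, hDx]
  have hcalBW : calB *ᵥ W = 0 := by
    rw [smul_mulVec, ← hDx, mul_mul_nonsing_inv_mulVec_eq_zero _ _ _ hD hBx, smul_zero]
  have hcalBTU : calBᵀ *ᵥ U = 0 := by
    rw [transpose_smul, smul_mulVec,
      transpose_mul_mul_nonsing_inv_mulVec_eq_zero D hcalAsymm hBsymm hcalAU hBx, smul_zero]
  refine ⟨?_, ?_, ?_, ?_⟩ <;>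
    simp only [u, v₁, v₂, w, V, mulVec_zero, smul_zero, add_zero, zero_add, hcalAU, hcalDW,
      hcalBW, hcalBTU, x]

theorem warp_and_extension_free_thermally_stable
    (T₀ T₁ R₀A R₀B R₀D Tγ : ℝ) (hT₁ : T₁ ≠ 0) (h : ℝ) (hh : 0 < h)
    (ε : ℝ) (hε : ε = -1 ∨ ε = 1) :
    let A : Matrix (Fin 3) (Fin 3) ℝ :=
      !![T₀ + 2*T₁ + R₀A, -T₀ + 2*T₁ - R₀A, 0;
         -T₀ + 2*T₁ - R₀A, T₀ + 2*T₁ + R₀A, 0;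
         0, 0, 2*(T₀ - R₀A)]
    let D : Matrix (Fin 3) (Fin 3) ℝ :=
      !![T₀ + 2*T₁ + R₀D, -T₀ + 2*T₁ - R₀D, 0;
         -T₀ + 2*T₁ - R₀D, T₀ + 2*T₁ + R₀D, 0;
         0, 0, 2*(T₀ - R₀D)]
    let B : Matrix (Fin 3) (Fin 3) ℝ :=
      !![R₀B, -R₀B, 0; -R₀B, R₀B, 0; 0, 0, -2*R₀B]
    let U : Fin 3 → ℝ := ![Tγ, Tγ, 0]
    let W : Fin 3 → ℝ := ![Tγ, Tγ, 0]
    let V : Fin 3 → ℝ := 0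
    let calA := (A - (3 : ℝ) • (B * D⁻¹ * B))⁻¹
    let calB := (-3 : ℝ) • (calA * B * D⁻¹)
    let calD := (D - (3 : ℝ) • (B * A⁻¹ * B))⁻¹
    let u := calA.mulVec U + calB.mulVec V
    let v₁ := (2 / h) • (calB.transpose.mulVec U + (3 : ℝ) • calD.mulVec V)
    let v₂ := (h / 6) • ((3 : ℝ) • calA.mulVec V + calB.mulVec W)
    let w := calB.transpose.mulVec V + calD.mulVec W
    IsUnit A.det → IsUnit D.det →
    IsUnit (A - (3 : ℝ) • (B * D⁻¹ * B)).det →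
    IsUnit (D - (3 : ℝ) • (B * A⁻¹ * B)).det →
      (u = (Tγ / (4 * T₁)) • (![1, 1, 0] : Fin 3 → ℝ) ∧
        w = (Tγ / (4 * T₁)) • (![1, 1, 0] : Fin 3 → ℝ) ∧
        v₁ = 0 ∧ v₂ = 0) :=
  warp_and_extension_free_thermally_stable_general T₀ T₁ R₀A R₀B R₀D Tγ hT₁ h
end

section
/- Let T₀, T₁, R₀ᴬ, R₀ᴮ, R₀ᴰ, R₁ᴰ, T_γ, ρ ∈ ℝ with T₁ ≠ 0, h > 0, ε ∈ {−1, 1}. Define A = [[T₀+2T₁+R₀ᴬ, −T₀+2T₁−R₀ᴬ, 0], [−T₀+2T₁−R₀ᴬ, T₀+2T₁+R₀ᴬ, 0], [0, 0, 2(T₀−R₀ᴬ)]] (so R₁ᴬ = 0), D = [[T₀+2T₁+R₀ᴰ+4R₁ᴰ, −T₀+2T₁−R₀ᴰ, 0], [−T₀+2T₁−R₀ᴰ, T₀+2T₁+R₀ᴰ−4R₁ᴰ, 0], [0, 0, 2(T₀−R₀ᴰ)]], B = [[R₀ᴮ, −R₀ᴮ, 0], [−R₀ᴮ, R₀ᴮ,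 0], [0, 0, −2R₀ᴮ]], U = (T_γ, T_γ, 0), V = (0,0,0), W = (T_γ+ε·ρ·R₁ᴰ, T_γ−ε·ρ·R₁ᴰ, 0). Assume A, D, A − 3·B·D⁻¹·B and D − 3·B·A⁻¹·B are invertible. Then u = (T_γ/(4T₁))·(1, 1, 0), v₁ = (0, 0, 0), and v₂ is purely anisotropic: (v₂)₁ + (v₂)₂ = 0 and (v₂)₆ = 0. In words: such a laminate is a warp-free thermally stable laminate — a uniform temperature change produces an isotropic dilatation and no curvature, while a temperature gradient stretches the plate without change of surface. -/
/-!
The vector `e = (1, 1, 0)` lies in the kernel of `B` (on both sides) and is an eigenvector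
of `A` with eigenvalue `4 T₁`, so the Schur complement `A - 3 B D⁻¹ B` acts on `e` as `A`
does. This gives `𝒜 e = e / (4 T₁)` and `eᵀ ℬ = 0`; the latter kills `v₁` and the isotropic
part of `v₂`. The shear direction `f = (0, 0, 1)` is a common left eigenvector of `A`, `B`
and `D`, hence of `ℬ`, and `W ⊥ f` then gives `(v₂)₆ = 0`.
-/

open Matrix

namespace Matrix

variable {n K : Type*} [Fintype n] [DecidableEq n] [Field K]

theorem inv_mulVec_eq_inv_smul {M : Matrix n n K} (hM : IsUnit M.det) {v : n → K} {c : K}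
    (h : M *ᵥ v = c • v) : M⁻¹ *ᵥ v = c⁻¹ • v := by
  have hv : v = c • (M⁻¹ *ᵥ v) := by
    rw [← mulVec_smul, ← h, mulVec_mulVec, nonsing_inv_mul _ hM, one_mulVec]
  rcases eq_or_ne c 0 with rfl | hc
  · simp only [zero_smul] at hv
    simp [hv]
  · calc M⁻¹ *ᵥ v = c⁻¹ • c • (M⁻¹ *ᵥ v) := by
          rw [smul_smul, inv_mul_cancel₀ hc, one_smul]
      _ = c⁻¹ • v := by rw [← hv]

theorem vecMul_inv_eq_inv_smul {M : Matrix n n K} (hM : IsUnit M.det) {v : n → K} {c : K}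
    (h : v ᵥ* M = c • v) : v ᵥ* M⁻¹ = c⁻¹ • v := by
  have hv : v = c • (v ᵥ* M⁻¹) := by
    rw [← smul_vecMul, ← h, vecMul_vecMul, mul_nonsing_inv _ hM, vecMul_one]
  rcases eq_or_ne c 0 with rfl | hc
  · simp only [zero_smul] at hv
    simp [hv]
  · calc v ᵥ* M⁻¹ = c⁻¹ • c • (v ᵥ* M⁻¹) := by
          rw [smul_smul, inv_mul_cancel₀ hc, one_smul]
      _ = c⁻¹ • v := by rw [← hv]

end Matrix

section Compliance

variable {n K : Type*} [Fintype n] [DecidableEq n] [Field K]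

-- The compliance tensors `𝒜` and `ℬ` of a laminate with stiffness tensors `A`, `B`, `D`.
noncomputable def membraneCompliance (A B D : Matrix n n K) : Matrix n n K :=
  (A - (3 : K) • (B * D⁻¹ * B))⁻¹

noncomputable def couplingCompliance (A B D : Matrix n n K) : Matrix n n K :=
  (-3 : K) • (membraneCompliance A B D * B * D⁻¹)

variable {A B D : Matrix n n K} {v : n → K} {a b c : K}

theorem membraneCompliance_mulVec_eq_inv_smul
    (hM : IsUnit (A - (3 : K) • (B * D⁻¹ * B)).det) (hA : A *ᵥ v = a • v) (hB : B *ᵥ v = 0) :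
    membraneCompliance A B D *ᵥ v = a⁻¹ • v := by
  refine inv_mulVec_eq_inv_smul hM ?_
  rw [sub_mulVec, smul_mulVec, ← mulVec_mulVec, hB, mulVec_zero, smul_zero, sub_zero, hA]

theorem vecMul_couplingCompliance_eq_smul (hM : IsUnit (A - (3 : K) • (B * D⁻¹ * B)).det)
    (hA : v ᵥ* A = a • v) (hB : v ᵥ* B = b • v) (hBD : v ᵥ* (B * D⁻¹) = c • v) :
    v ᵥ* couplingCompliance A B D = (-3 * (a - 3 * (c * b))⁻¹ * c) • v := by
  have hSchur : v ᵥ* (A - (3 : K) • (B * D⁻¹ * B)) = (a - 3 * (c * b)) • v := by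
    rw [vecMul_sub, vecMul_smul, ← vecMul_vecMul, hBD, smul_vecMul, hA, hB]
    module
  rw [couplingCompliance, membraneCompliance, vecMul_smul, Matrix.mul_assoc, ← vecMul_vecMul,
    vecMul_inv_eq_inv_smul hM hSchur, smul_vecMul, hBD]
  module

theorem vecMul_couplingCompliance_eq_zero (hM : IsUnit (A - (3 : K) • (B * D⁻¹ * B)).det)
    (hA : v ᵥ* A = a • v) (hB : v ᵥ* B = 0) : v ᵥ* couplingCompliance A B D = 0 := by
  have hBD : v ᵥ* (B * D⁻¹) = (0 : K) • v := by
    rw [← vecMul_vecMul, hB, zero_vecMul, zero_smul]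
  simpa using vecMul_couplingCompliance_eq_smul hM hA (b := 0) (by rw [hB, zero_smul]) hBD

end Compliance

theorem warp_free_thermally_stable_general
    (T₀ T₁ R₀A R₀B R₀D R₁D Tγ ρ : ℝ) (h : ℝ)
    (ε : ℝ) :
    let A : Matrix (Fin 3) (Fin 3) ℝ :=
      !![T₀ + 2*T₁ + R₀A, -T₀ + 2*T₁ - R₀A, 0;
         -T₀ + 2*T₁ - R₀A, T₀ + 2*T₁ + R₀A, 0;
         0, 0, 2*(T₀ - R₀A)]
    let D : Matrix (Fin 3) (Fin 3) ℝ :=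
      !![T₀ + 2*T₁ + R₀D + 4*R₁D, -T₀ + 2*T₁ - R₀D, 0;
         -T₀ + 2*T₁ - R₀D, T₀ + 2*T₁ + R₀D - 4*R₁D, 0;
         0, 0, 2*(T₀ - R₀D)]
    let B : Matrix (Fin 3) (Fin 3) ℝ :=
      !![R₀B, -R₀B, 0; -R₀B, R₀B, 0; 0, 0, -2*R₀B]
    let U : Fin 3 → ℝ := ![Tγ, Tγ, 0]
    let V : Fin 3 → ℝ := 0
    let W : Fin 3 → ℝ := ![Tγ + ε * ρ * R₁D, Tγ - ε * ρ * R₁D, 0]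
    let calA := (A - (3 : ℝ) • (B * D⁻¹ * B))⁻¹
    let calB := (-3 : ℝ) • (calA * B * D⁻¹)
    let calD := (D - (3 : ℝ) • (B * A⁻¹ * B))⁻¹
    let u := calA.mulVec U + calB.mulVec V
    let v₁ := (2 / h) • (calB.transpose.mulVec U + (3 : ℝ) • calD.mulVec V)
    let v₂ := (h / 6) • ((3 : ℝ) • calA.mulVec V + calB.mulVec W)
    IsUnit A.det → IsUnit D.det →
    IsUnit (A - (3 : ℝ) • (B * D⁻¹ * B)).det →
    IsUnit (D - (3 : ℝ) • (B * A⁻¹ * B)).det →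
      (u = (Tγ / (4 * T₁)) • (![1, 1, 0] : Fin 3 → ℝ) ∧
        v₁ = 0 ∧ v₂ 0 + v₂ 1 = 0 ∧ v₂ 2 = 0) := by
  intro A D B U V W calA calB calD u v₁ v₂ _ hD hM _
  set e : Fin 3 → ℝ := ![1, 1, 0]
  set f : Fin 3 → ℝ := ![0, 0, 1]
  obtain ⟨hAe, hBe, heA, heB, hfA, hfB, hfD, hU⟩ :
      A *ᵥ e = (4 * T₁) • e ∧ B *ᵥ e = 0 ∧ e ᵥ* A = (4 * T₁) • e ∧ e ᵥ* B = 0 ∧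
      f ᵥ* A = (2 * (T₀ - R₀A)) • f ∧ f ᵥ* B = (-2 * R₀B) • f ∧
      f ᵥ* D = (2 * (T₀ - R₀D)) • f ∧ U = Tγ • e := by
    refine ⟨?_, ?_, ?_, ?_, ?_, ?_, ?_, ?_⟩ <;> ext i <;> fin_cases i <;>
      simp [A, B, D, U, e, f, mulVec, vecMul, dotProduct, Fin.sum_univ_three] <;> ring
  have heMembrane : calA *ᵥ e = (4 * T₁)⁻¹ • e :=
    membraneCompliance_mulVec_eq_inv_smul hM hAe hBe
  have heCoupling : e ᵥ* calB = 0 := vecMul_couplingCompliance_eq_zero hM heA heB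
  obtain ⟨c, hfCoupling⟩ : ∃ c : ℝ, f ᵥ* calB = c • f :=
    ⟨_, vecMul_couplingCompliance_eq_smul hM hfA hfB
      (by rw [← vecMul_vecMul, hfB, smul_vecMul, vecMul_inv_eq_inv_smul hD hfD, smul_smul])⟩
  have he : e ⬝ᵥ (calB *ᵥ W) = 0 := by rw [dotProduct_mulVec, heCoupling, zero_dotProduct]
  have hf : f ⬝ᵥ (calB *ᵥ W) = 0 := by
    rw [dotProduct_mulVec, hfCoupling, smul_dotProduct]
    simp [f, W, dotProduct, Fin.sum_univ_three]
  simp [e, f, dotProduct, Fin.sum_univ_three] at he hf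
  refine ⟨?_, ?_, ?_, ?_⟩
  · change calA *ᵥ U + calB *ᵥ 0 = _
    rw [mulVec_zero, add_zero, hU, mulVec_smul, heMembrane, smul_smul, div_eq_mul_inv]
  · change (2 / h) • (calBᵀ *ᵥ U + (3 : ℝ) • calD *ᵥ 0) = 0
    rw [mulVec_zero, smul_zero, add_zero, mulVec_transpose, hU, smul_vecMul, heCoupling,
      smul_zero, smul_zero]
  · simp [v₂, V, ← mul_add, he]
  · simp [v₂, V, hf]

theorem warp_free_thermally_stable
    (T₀ T₁ R₀A R₀B R₀D R₁D Tγ ρ : ℝ) (hT₁ : T₁ ≠ 0) (h : ℝ) (hh : 0 < h)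
    (ε : ℝ) (hε : ε = -1 ∨ ε = 1) :
    let A : Matrix (Fin 3) (Fin 3) ℝ :=
      !![T₀ + 2*T₁ + R₀A, -T₀ + 2*T₁ - R₀A, 0;
         -T₀ + 2*T₁ - R₀A, T₀ + 2*T₁ + R₀A, 0;
         0, 0, 2*(T₀ - R₀A)]
    let D : Matrix (Fin 3) (Fin 3) ℝ :=
      !![T₀ + 2*T₁ + R₀D + 4*R₁D, -T₀ + 2*T₁ - R₀D, 0;
         -T₀ + 2*T₁ - R₀D, T₀ + 2*T₁ + R₀D - 4*R₁D, 0;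
         0, 0, 2*(T₀ - R₀D)]
    let B : Matrix (Fin 3) (Fin 3) ℝ :=
      !![R₀B, -R₀B, 0; -R₀B, R₀B, 0; 0, 0, -2*R₀B]
    let U : Fin 3 → ℝ := ![Tγ, Tγ, 0]
    let V : Fin 3 → ℝ := 0
    let W : Fin 3 → ℝ := ![Tγ + ε * ρ * R₁D, Tγ - ε * ρ * R₁D, 0]
    let calA := (A - (3 : ℝ) • (B * D⁻¹ * B))⁻¹
    let calB := (-3 : ℝ) • (calA * B * D⁻¹)
    let calD := (D - (3 : ℝ) • (B * A⁻¹ * B))⁻¹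
    let u := calA.mulVec U + calB.mulVec V
    let v₁ := (2 / h) • (calB.transpose.mulVec U + (3 : ℝ) • calD.mulVec V)
    let v₂ := (h / 6) • ((3 : ℝ) • calA.mulVec V + calB.mulVec W)
    IsUnit A.det → IsUnit D.det →
    IsUnit (A - (3 : ℝ) • (B * D⁻¹ * B)).det →
    IsUnit (D - (3 : ℝ) • (B * A⁻¹ * B)).det →
      (u = (Tγ / (4 * T₁)) • (![1, 1, 0] : Fin 3 → ℝ) ∧
        v₁ = 0 ∧ v₂ 0 + v₂ 1 = 0 ∧ v₂ 2 = 0) :=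
  warp_free_thermally_stable_general T₀ T₁ R₀A R₀B R₀D R₁D Tγ ρ h ε
end

section
/- Let T₀, T₁, R₀ᴬ, R₁ᴬ, R₀ᴮ, R₀ᴰ, R₁ᴰ, T_γ, ρ ∈ ℝ, h > 0, ε ∈ {−1, 1}. Define A = [[T₀+2T₁+R₀ᴬ+4R₁ᴬ, −T₀+2T₁−R₀ᴬ, 0], [−T₀+2T₁−R₀ᴬ, T₀+2T₁+R₀ᴬ−4R₁ᴬ, 0], [0, 0, 2(T₀−R₀ᴬ)]], D the analogous matrix with (R₀ᴰ, R₁ᴰ), B = [[R₀ᴮ, −R₀ᴮ, 0], [−R₀ᴮ, R₀ᴮ, 0], [0, 0, −2R₀ᴮ]], U = (T_γ+ε·ρ·R₁ᴬ, T_γ−ε·ρ·R₁ᴬ, 0), V = (0,0,0), W = (T_γ+ε·ρ·R₁ᴰ, T_γ−ε·ρ·R₁ᴰ, 0). Assume A, D, A − 3·B·D⁻¹·B and D − 3·B·A⁻¹·B are invertible. Then the isotropic parts of the compliance thermoelastic coupling tensors satisfy 12·((v₂)₁ + (v₂)₂) = h²·((v₁)₁ + (v₁)₂); that is, the ratio of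 the isotropic phases of v₂ and v₁ equals h²/12 and is independent of the material and of the laminate stiffnesses. -/
/-!
Write e = (1, 1, 0) and f = (1, -1, 0). The coupling matrix B kills e and maps f to a multiple
of f, so for symmetric orthotropic X, Y the isotropic sum e ⬝ (X B Y w) factors as
c (e ⬝ X f) (f ⬝ Y w), and e ⬝ (X B Y)ᵀ u = c (e ⬝ Y f) (f ⬝ X u). For X = 𝒜 = (A - 3 B D⁻¹ B)⁻¹ and
Y = D⁻¹ these factors are read off the adjugates: up to factors common to both sides they only
involve p + q, q + r and r - p. The Schur correction 3 B D⁻¹ B is a multiple of f fᵀ on the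
in-plane block, so it leaves these three combinations of A unchanged. In polar form both
products then equal the same multiple of R₁ᴬ R₁ᴰ (ε ρ T₁ - T_γ), and the ratio h² / 12 is what
remains of the prefactors 2 / h and h / 6.

Since Lean's matrix inverse is `Ring.inverse det • adjugate`, every step is a polynomial identity
in the adjugate entries and the `Ring.inverse` of the determinants.
-/

open Matrix

section Orthotropic

variable {R : Type*} [CommRing R]

def orthotropicMatrix (p q r s : R) : Matrix (Fin 3) (Fin 3) R :=
  !![p, q, 0; q, r, 0; 0, 0, s]

def couplingMatrix (c : R) : Matrix (Fin 3) (Fin 3) R :=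
  orthotropicMatrix c (-c) c (-2 * c)

def polarMatrix (T₀ T₁ R₀ R₁ : R) : Matrix (Fin 3) (Fin 3) R :=
  orthotropicMatrix (T₀ + 2 * T₁ + R₀ + 4 * R₁) (-T₀ + 2 * T₁ - R₀)
    (T₀ + 2 * T₁ + R₀ - 4 * R₁) (2 * (T₀ - R₀))

theorem orthotropicMatrix_transpose (p q r s : R) :
    (orthotropicMatrix p q r s)ᵀ = orthotropicMatrix p q r s := by
  ext i j; fin_cases i <;> fin_cases j <;> rfl

theorem couplingMatrix_transpose (c : R) : (couplingMatrix c)ᵀ = couplingMatrix c :=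
  orthotropicMatrix_transpose _ _ _ _

theorem orthotropicMatrix_sub (p q r s p' q' r' s' : R) :
    orthotropicMatrix p q r s - orthotropicMatrix p' q' r' s' =
      orthotropicMatrix (p - p') (q - q') (r - r') (s - s') := by
  ext i j; fin_cases i <;> fin_cases j <;> simp [orthotropicMatrix]

theorem smul_orthotropicMatrix (k p q r s : R) :
    k • orthotropicMatrix p q r s = orthotropicMatrix (k * p) (k * q) (k * r) (k * s) := by
  ext i j; fin_cases i <;> fin_cases j <;> simp [orthotropicMatrix]

theorem det_orthotropicMatrix (p q r s : R) :
    (orthotropicMatrix p q r s).det = (p * r - q * q) * s := by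
  simp only [orthotropicMatrix, det_fin_three, of_apply, cons_val_zero, cons_val_one,
    cons_val_two, tail_cons, head_cons]
  ring

theorem adjugate_orthotropicMatrix (p q r s : R) :
    (orthotropicMatrix p q r s).adjugate =
      orthotropicMatrix (r * s) (-(q * s)) (p * s) (p * r - q * q) := by
  ext i j; fin_cases i <;> fin_cases j <;> simp [orthotropicMatrix, adjugate_fin_three]

theorem inv_orthotropicMatrix (p q r s : R) :
    (orthotropicMatrix p q r s)⁻¹ =
      Ring.inverse ((p * r - q * q) * s) •
        orthotropicMatrix (r * s) (-(q * s)) (p * s) (p * r - q * q) := by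
  rw [inv_def, det_orthotropicMatrix, adjugate_orthotropicMatrix]

theorem couplingMatrix_mul_orthotropicMatrix_mul (c p q r s : R) :
    couplingMatrix c * orthotropicMatrix p q r s * couplingMatrix c =
      orthotropicMatrix (c ^ 2 * (p - 2 * q + r)) (-(c ^ 2 * (p - 2 * q + r)))
        (c ^ 2 * (p - 2 * q + r)) (4 * c ^ 2 * s) := by
  simp only [couplingMatrix, orthotropicMatrix, mul_fin_three]
  ring_nf

theorem orthotropicMatrix_sub_smul_couplingMatrix_mul (t c p q r s y₁ y₂ y₃ y₄ : R) :
    orthotropicMatrix p q r s - t • (couplingMatrix c * orthotropicMatrix y₁ y₂ y₃ y₄ *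
        couplingMatrix c) =
      orthotropicMatrix (p - t * c ^ 2 * (y₁ - 2 * y₂ + y₃)) (q + t * c ^ 2 * (y₁ - 2 * y₂ + y₃))
        (r - t * c ^ 2 * (y₁ - 2 * y₂ + y₃)) (s - 4 * t * c ^ 2 * y₄) := by
  rw [couplingMatrix_mul_orthotropicMatrix_mul, smul_orthotropicMatrix, orthotropicMatrix_sub]
  congr 1 <;> ring

theorem orthotropicMatrix_mul_couplingMatrix_mul_mulVec_add (c x₁ x₂ x₃ x₄ y₁ y₂ y₃ y₄ : R)
    (w : Fin 3 → R) :
    ((orthotropicMatrix x₁ x₂ x₃ x₄ * couplingMatrix c * orthotropicMatrix y₁ y₂ y₃ y₄) *ᵥ w) 0 +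
      ((orthotropicMatrix x₁ x₂ x₃ x₄ * couplingMatrix c * orthotropicMatrix y₁ y₂ y₃ y₄) *ᵥ w) 1 =
      c * (x₁ - x₃) * ((y₁ - y₂) * w 0 + (y₂ - y₃) * w 1) := by
  simp only [couplingMatrix, orthotropicMatrix, mul_fin_three, mulVec, dotProduct,
    Fin.sum_univ_three, of_apply, cons_val_zero, cons_val_one, cons_val_two, tail_cons, head_cons]
  ring

theorem inv_mul_couplingMatrix_mul_inv_mulVec_add_eq_transpose
    (c pM qM rM sM pD qD rD sD : R) (u w : Fin 3 → R)
    (huw : (rM - pM) * ((rD + qD) * w 0 - (qD + pD) * w 1) =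
      (rD - pD) * ((rM + qM) * u 0 - (qM + pM) * u 1)) :
    let X := (orthotropicMatrix pM qM rM sM)⁻¹ * couplingMatrix c *
      (orthotropicMatrix pD qD rD sD)⁻¹
    (X *ᵥ w) 0 + (X *ᵥ w) 1 = (Xᵀ *ᵥ u) 0 + (Xᵀ *ᵥ u) 1 := by
  intro X
  simp only [X, transpose_mul, ← mul_assoc, inv_orthotropicMatrix, smul_orthotropicMatrix,
    orthotropicMatrix_transpose, couplingMatrix_transpose,
    orthotropicMatrix_mul_couplingMatrix_mul_mulVec_add]
  linear_combination
    (c * Ring.inverse ((pM * rM - qM * qM) * sM) * Ring.inverse ((pD * rD - qD * qD) * sD) *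
      sM * sD) * huw

theorem polarMatrix_compliance_coupling_isotropic_sum_eq_transpose
    (T₀ T₁ R₀A R₁A R₀D R₁D c Tγ κ : R) :
    let A := polarMatrix T₀ T₁ R₀A R₁A
    let D := polarMatrix T₀ T₁ R₀D R₁D
    let B := couplingMatrix c
    let X := (A - (3 : R) • (B * D⁻¹ * B))⁻¹ * B * D⁻¹
    let U : Fin 3 → R := ![Tγ + κ * R₁A, Tγ - κ * R₁A, 0]
    let W : Fin 3 → R := ![Tγ + κ * R₁D, Tγ - κ * R₁D, 0]
    (X *ᵥ W) 0 + (X *ᵥ W) 1 = (Xᵀ *ᵥ U) 0 + (Xᵀ *ᵥ U) 1 := by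
  intro A D B X U W
  obtain ⟨k, sM, hM⟩ : ∃ k sM, A - (3 : R) • (B * D⁻¹ * B) =
      orthotropicMatrix (T₀ + 2 * T₁ + R₀A + 4 * R₁A - k) (-T₀ + 2 * T₁ - R₀A + k)
        (T₀ + 2 * T₁ + R₀A - 4 * R₁A - k) sM := by
    simp only [A, D, B, polarMatrix]
    rw [inv_orthotropicMatrix, smul_orthotropicMatrix,
      orthotropicMatrix_sub_smul_couplingMatrix_mul]
    exact ⟨_, _, rfl⟩
  simp only [X]
  rw [hM]
  simp only [D, polarMatrix]
  apply inv_mul_couplingMatrix_mul_inv_mulVec_add_eq_transpose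
  simp only [U, W, cons_val_zero, cons_val_one]
  ring

end Orthotropic

theorem isotropic_phases_ratio_v2_v1_general
    (T₀ T₁ R₀A R₁A R₀B R₀D R₁D Tγ ρ : ℝ) (h : ℝ)
    (ε : ℝ) :
    let A : Matrix (Fin 3) (Fin 3) ℝ :=
      !![T₀ + 2*T₁ + R₀A + 4*R₁A, -T₀ + 2*T₁ - R₀A, 0;
         -T₀ + 2*T₁ - R₀A, T₀ + 2*T₁ + R₀A - 4*R₁A, 0;
         0, 0, 2*(T₀ - R₀A)]
    let D : Matrix (Fin 3) (Fin 3) ℝ :=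
      !![T₀ + 2*T₁ + R₀D + 4*R₁D, -T₀ + 2*T₁ - R₀D, 0;
         -T₀ + 2*T₁ - R₀D, T₀ + 2*T₁ + R₀D - 4*R₁D, 0;
         0, 0, 2*(T₀ - R₀D)]
    let B : Matrix (Fin 3) (Fin 3) ℝ :=
      !![R₀B, -R₀B, 0; -R₀B, R₀B, 0; 0, 0, -2*R₀B]
    let U : Fin 3 → ℝ := ![Tγ + ε * ρ * R₁A, Tγ - ε * ρ * R₁A, 0]
    let V : Fin 3 → ℝ := 0
    let W : Fin 3 → ℝ := ![Tγ + ε * ρ * R₁D, Tγ - ε * ρ * R₁D, 0]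
    let calA := (A - (3 : ℝ) • (B * D⁻¹ * B))⁻¹
    let calB := (-3 : ℝ) • (calA * B * D⁻¹)
    let calD := (D - (3 : ℝ) • (B * A⁻¹ * B))⁻¹
    let v₁ := (2 / h) • (calB.transpose.mulVec U + (3 : ℝ) • calD.mulVec V)
    let v₂ := (h / 6) • ((3 : ℝ) • calA.mulVec V + calB.mulVec W)
    IsUnit A.det → IsUnit D.det →
    IsUnit (A - (3 : ℝ) • (B * D⁻¹ * B)).det →
    IsUnit (D - (3 : ℝ) • (B * A⁻¹ * B)).det →
      12 * (v₂ 0 + v₂ 1) = h ^ 2 * (v₁ 0 + v₁ 1) := by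
  intro A D B U V W calA calB calD v₁ v₂ _ _ _ _
  have hiso : (calB *ᵥ W) 0 + (calB *ᵥ W) 1 = (calBᵀ *ᵥ U) 0 + (calBᵀ *ᵥ U) 1 := by
    simp only [calB, transpose_smul, smul_mulVec, Pi.smul_apply, smul_eq_mul, ← mul_add]
    exact congrArg (-3 * ·) (polarMatrix_compliance_coupling_isotropic_sum_eq_transpose
      T₀ T₁ R₀A R₁A R₀D R₁D R₀B Tγ (ε * ρ))
  have hscale : h ^ 2 * (2 / h) = 12 * (h / 6) := by
    rw [sq, mul_div_assoc', mul_div_right_comm, mul_self_div_self]; ring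
  simp only [v₁, v₂, V, mulVec_zero, smul_zero, add_zero, zero_add, Pi.smul_apply, smul_eq_mul,
    ← mul_add, hiso, ← mul_assoc, hscale]

theorem isotropic_phases_ratio_v2_v1
    (T₀ T₁ R₀A R₁A R₀B R₀D R₁D Tγ ρ : ℝ) (h : ℝ) (hh : 0 < h)
    (ε : ℝ) (hε : ε = -1 ∨ ε = 1) :
    let A : Matrix (Fin 3) (Fin 3) ℝ :=
      !![T₀ + 2*T₁ + R₀A + 4*R₁A, -T₀ + 2*T₁ - R₀A, 0;
         -T₀ + 2*T₁ - R₀A, T₀ + 2*T₁ + R₀A - 4*R₁A, 0;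
         0, 0, 2*(T₀ - R₀A)]
    let D : Matrix (Fin 3) (Fin 3) ℝ :=
      !![T₀ + 2*T₁ + R₀D + 4*R₁D, -T₀ + 2*T₁ - R₀D, 0;
         -T₀ + 2*T₁ - R₀D, T₀ + 2*T₁ + R₀D - 4*R₁D, 0;
         0, 0, 2*(T₀ - R₀D)]
    let B : Matrix (Fin 3) (Fin 3) ℝ :=
      !![R₀B, -R₀B, 0; -R₀B, R₀B, 0; 0, 0, -2*R₀B]
    let U : Fin 3 → ℝ := ![Tγ + ε * ρ * R₁A, Tγ - ε * ρ * R₁A, 0]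
    let V : Fin 3 → ℝ := 0
    let W : Fin 3 → ℝ := ![Tγ + ε * ρ * R₁D, Tγ - ε * ρ * R₁D, 0]
    let calA := (A - (3 : ℝ) • (B * D⁻¹ * B))⁻¹
    let calB := (-3 : ℝ) • (calA * B * D⁻¹)
    let calD := (D - (3 : ℝ) • (B * A⁻¹ * B))⁻¹
    let v₁ := (2 / h) • (calB.transpose.mulVec U + (3 : ℝ) • calD.mulVec V)
    let v₂ := (h / 6) • ((3 : ℝ) • calA.mulVec V + calB.mulVec W)
    IsUnit A.det → IsUnit D.det →
    IsUnit (A - (3 : ℝ) • (B * D⁻¹ * B)).det →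
    IsUnit (D - (3 : ℝ) • (B * A⁻¹ * B)).det →
      12 * (v₂ 0 + v₂ 1) = h ^ 2 * (v₁ 0 + v₁ 1) :=
  isotropic_phases_ratio_v2_v1_general T₀ T₁ R₀A R₁A R₀B R₀D R₁D Tγ ρ h ε
end

section
/- With the same data as in the previous setting — A, D orthotropic Kelvin matrices with polar parameters (T₀, T₁, R₀ᴬ, R₁ᴬ) and (T₀, T₁, R₀ᴰ, R₁ᴰ), B with only R₀ᴮ (R₁ᴮ = 0), U = (T_γ+ε·ρ·R₁ᴬ, T_γ−ε·ρ·R₁ᴬ, 0), V = (0,0,0), W = (T_γ+ε·ρ·R₁ᴰ, T_γ−ε·ρ·R₁ᴰ, 0), with A, D, A − 3·B·D⁻¹·B, D − 3·B·A⁻¹·B invertible — the compliance thermoelastic coupling tensors satisfy (v₁)₆ = 0, (v₂)₆ = 0, and (R₁ᴰ)²·((v₁)₁ − (v₁)₂)² = (T₁)²·((v₁)₁ + (v₁)₂)² and (R₁ᴬ)²·((v₂)₁ − (v₂)₂)² = (T₁)²·((v₂)₁ + (v₂)₂)²; that is, the ratio between the anisotropic and isotropic phases of v₁ equals T₁/R₁ᴰ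 (depending only on the material and the bending stiffness), and that of v₂ equals T₁/R₁ᴬ (depending only on the material and the extension stiffness). -/
/-! The coupling matrix `B` has its first two rows summing to zero, so `B y` always has vanishing
isotropic part. For the polar-form stiffness,
`(A x) 0 + (A x) 1 = 4 (T₁ (x 0 + x 1) + R₁ (x 0 - x 1))`, so every `x` with `A x` in the range
of `B` satisfies `R₁ (x 0 - x 1) = -T₁ (x 0 + x 1)`. By symmetry `ℬᵀ = -3 D⁻¹ B 𝒜`, so up to
scalars `v₁ = D⁻¹ B (𝒜 U)` solves `D v₁ = B (𝒜 U)`, and `v₂ = 𝒜 B (D⁻¹ W)` solves the Schur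
complement equation, i.e. `A v₂ = B (D⁻¹ W + 3 D⁻¹ B v₂)`. The shear components vanish because
all matrices involved keep the shear index in its own block. -/

open Matrix

noncomputable def orthotropicKelvin (T₀ T₁ R₀ R₁ : ℝ) : Matrix (Fin 3) (Fin 3) ℝ :=
  !![T₀ + 2*T₁ + R₀ + 4*R₁, -T₀ + 2*T₁ - R₀, 0;
     -T₀ + 2*T₁ - R₀, T₀ + 2*T₁ + R₀ - 4*R₁, 0;
     0, 0, 2*(T₀ - R₀)]

noncomputable def squareCoupling (R₀ : ℝ) : Matrix (Fin 3) (Fin 3) ℝ :=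
  !![R₀, -R₀, 0; -R₀, R₀, 0; 0, 0, -2*R₀]

/-- The anisotropic-to-isotropic phase ratio `|x 0 - x 1| / |x 0 + x 1|` of `x` equals `|t / r|`,
with denominators cleared. -/
def HasPhaseRatio (t r : ℝ) (x : Fin 3 → ℝ) : Prop :=
  r ^ 2 * (x 0 - x 1) ^ 2 = t ^ 2 * (x 0 + x 1) ^ 2

def shearBlock : Fin 3 → ℕ := ![0, 0, 1]

theorem HasPhaseRatio.smul {t r : ℝ} {x : Fin 3 → ℝ} (hx : HasPhaseRatio t r x) (c : ℝ) :
    HasPhaseRatio t r (c • x) := by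
  unfold HasPhaseRatio at *
  simp only [Pi.smul_apply, smul_eq_mul]
  linear_combination c ^ 2 * hx

theorem orthotropicKelvin_isSymm (T₀ T₁ R₀ R₁ : ℝ) : (orthotropicKelvin T₀ T₁ R₀ R₁).IsSymm :=
  IsSymm.ext fun i j => by fin_cases i <;> fin_cases j <;> rfl

theorem squareCoupling_isSymm (R₀ : ℝ) : (squareCoupling R₀).IsSymm :=
  IsSymm.ext fun i j => by fin_cases i <;> fin_cases j <;> rfl

theorem blockTriangular_shearBlock_iff {R : Type*} [Zero R] {M : Matrix (Fin 3) (Fin 3) R} :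
    M.BlockTriangular shearBlock ↔ M 2 0 = 0 ∧ M 2 1 = 0 := by
  refine ⟨fun hM => ⟨hM (by decide), hM (by decide)⟩, fun ⟨h₀, h₁⟩ i j hij => ?_⟩
  fin_cases i <;> fin_cases j <;> first | assumption | exact absurd hij (by decide)

theorem Matrix.BlockTriangular.smul {m α R S : Type*} [LT α] [Zero R] [SMulZeroClass S R]
    {M : Matrix m m R} {b : m → α} (hM : M.BlockTriangular b) (k : S) :
    (k • M).BlockTriangular b :=
  fun _ _ hij => by rw [smul_apply, hM hij, smul_zero]

theorem orthotropicKelvin_blockTriangular (T₀ T₁ R₀ R₁ : ℝ) :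
    (orthotropicKelvin T₀ T₁ R₀ R₁).BlockTriangular shearBlock :=
  blockTriangular_shearBlock_iff.2 ⟨rfl, rfl⟩

theorem squareCoupling_blockTriangular (R₀ : ℝ) :
    (squareCoupling R₀).BlockTriangular shearBlock :=
  blockTriangular_shearBlock_iff.2 ⟨rfl, rfl⟩

theorem Matrix.BlockTriangular.mulVec_apply_two_eq_zero {R : Type*} [NonUnitalNonAssocSemiring R]
    {M : Matrix (Fin 3) (Fin 3) R} (hM : M.BlockTriangular shearBlock) {x : Fin 3 → R}
    (hx : x 2 = 0) : (M *ᵥ x) 2 = 0 := by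
  obtain ⟨h₀, h₁⟩ := blockTriangular_shearBlock_iff.1 hM
  simp [mulVec, dotProduct, Fin.sum_univ_three, h₀, h₁, hx]

theorem orthotropicKelvin_mulVec_add (T₀ T₁ R₀ R₁ : ℝ) (x : Fin 3 → ℝ) :
    (orthotropicKelvin T₀ T₁ R₀ R₁ *ᵥ x) 0 + (orthotropicKelvin T₀ T₁ R₀ R₁ *ᵥ x) 1
      = 4 * (T₁ * (x 0 + x 1) + R₁ * (x 0 - x 1)) := by
  simp only [orthotropicKelvin, mulVec, dotProduct, Fin.sum_univ_three, of_apply, cons_val',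
    cons_val_fin_one, cons_val_zero, cons_val_one, cons_val, zero_mul, add_zero]
  ring

theorem squareCoupling_mulVec_add (R₀ : ℝ) (y : Fin 3 → ℝ) :
    (squareCoupling R₀ *ᵥ y) 0 + (squareCoupling R₀ *ᵥ y) 1 = 0 := by
  simp only [squareCoupling, mulVec, dotProduct, Fin.sum_univ_three, of_apply, cons_val',
    cons_val_fin_one, cons_val_zero, cons_val_one, cons_val, zero_mul, add_zero]
  ring

theorem hasPhaseRatio_of_mulVec_eq {T₀ T₁ R₀ R₁ R₀B : ℝ} {x y : Fin 3 → ℝ}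
    (hxy : orthotropicKelvin T₀ T₁ R₀ R₁ *ᵥ x = squareCoupling R₀B *ᵥ y) :
    HasPhaseRatio T₁ R₁ x := by
  have hsum := orthotropicKelvin_mulVec_add T₀ T₁ R₀ R₁ x
  rw [hxy, squareCoupling_mulVec_add] at hsum
  have hlin : R₁ * (x 0 - x 1) = -(T₁ * (x 0 + x 1)) := by linarith
  unfold HasPhaseRatio
  linear_combination (R₁ * (x 0 - x 1) - T₁ * (x 0 + x 1)) * hlin

theorem hasPhaseRatio_inv_mulVec_squareCoupling_mulVec {T₀ T₁ R₀ R₁ : ℝ}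
    (hD : IsUnit (orthotropicKelvin T₀ T₁ R₀ R₁).det) (R₀B : ℝ) (y : Fin 3 → ℝ) :
    HasPhaseRatio T₁ R₁ ((orthotropicKelvin T₀ T₁ R₀ R₁)⁻¹ *ᵥ (squareCoupling R₀B *ᵥ y)) :=
  hasPhaseRatio_of_mulVec_eq (y := y) <| by rw [mulVec_mulVec, mul_nonsing_inv _ hD, one_mulVec]

theorem hasPhaseRatio_schurComplement_inv_mulVec_squareCoupling_mulVec {T₀ T₁ R₀ R₁ R₀B k : ℝ}
    {C : Matrix (Fin 3) (Fin 3) ℝ}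
    (hM : IsUnit
      (orthotropicKelvin T₀ T₁ R₀ R₁ - k • (squareCoupling R₀B * C * squareCoupling R₀B)).det)
    (y : Fin 3 → ℝ) :
    HasPhaseRatio T₁ R₁
      ((orthotropicKelvin T₀ T₁ R₀ R₁ - k • (squareCoupling R₀B * C * squareCoupling R₀B))⁻¹ *ᵥ
        (squareCoupling R₀B *ᵥ y)) := by
  set M := orthotropicKelvin T₀ T₁ R₀ R₁ - k • (squareCoupling R₀B * C * squareCoupling R₀B)
  set x := M⁻¹ *ᵥ (squareCoupling R₀B *ᵥ y)
  have hx : M *ᵥ x = squareCoupling R₀B *ᵥ y := by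
    rw [mulVec_mulVec, mul_nonsing_inv _ hM, one_mulVec]
  clear_value x
  apply hasPhaseRatio_of_mulVec_eq (T₀ := T₀) (R₀ := R₀) (R₀B := R₀B)
    (y := y + k • (C *ᵥ (squareCoupling R₀B *ᵥ x)))
  rw [mulVec_add, ← hx, sub_mulVec, mulVec_smul, smul_mulVec, mulVec_mulVec, mulVec_mulVec]
  abel

theorem anisotropic_to_isotropic_phase_ratios_general
    (T₀ T₁ R₀A R₁A R₀B R₀D R₁D Tγ ρ : ℝ) (h : ℝ)
    (ε : ℝ) :
    let A : Matrix (Fin 3) (Fin 3) ℝ :=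
      !![T₀ + 2*T₁ + R₀A + 4*R₁A, -T₀ + 2*T₁ - R₀A, 0;
         -T₀ + 2*T₁ - R₀A, T₀ + 2*T₁ + R₀A - 4*R₁A, 0;
         0, 0, 2*(T₀ - R₀A)]
    let D : Matrix (Fin 3) (Fin 3) ℝ :=
      !![T₀ + 2*T₁ + R₀D + 4*R₁D, -T₀ + 2*T₁ - R₀D, 0;
         -T₀ + 2*T₁ - R₀D, T₀ + 2*T₁ + R₀D - 4*R₁D, 0;
         0, 0, 2*(T₀ - R₀D)]
    let B : Matrix (Fin 3) (Fin 3) ℝ :=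
      !![R₀B, -R₀B, 0; -R₀B, R₀B, 0; 0, 0, -2*R₀B]
    let U : Fin 3 → ℝ := ![Tγ + ε * ρ * R₁A, Tγ - ε * ρ * R₁A, 0]
    let V : Fin 3 → ℝ := 0
    let W : Fin 3 → ℝ := ![Tγ + ε * ρ * R₁D, Tγ - ε * ρ * R₁D, 0]
    let calA := (A - (3 : ℝ) • (B * D⁻¹ * B))⁻¹
    let calB := (-3 : ℝ) • (calA * B * D⁻¹)
    let calD := (D - (3 : ℝ) • (B * A⁻¹ * B))⁻¹
    let v₁ := (2 / h) • (calB.transpose.mulVec U + (3 : ℝ) • calD.mulVec V)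
    let v₂ := (h / 6) • ((3 : ℝ) • calA.mulVec V + calB.mulVec W)
    IsUnit A.det → IsUnit D.det →
    IsUnit (A - (3 : ℝ) • (B * D⁻¹ * B)).det →
    IsUnit (D - (3 : ℝ) • (B * A⁻¹ * B)).det →
      (v₁ 2 = 0 ∧ v₂ 2 = 0 ∧
        R₁D ^ 2 * (v₁ 0 - v₁ 1) ^ 2 = T₁ ^ 2 * (v₁ 0 + v₁ 1) ^ 2 ∧
        R₁A ^ 2 * (v₂ 0 - v₂ 1) ^ 2 = T₁ ^ 2 * (v₂ 0 + v₂ 1) ^ 2) := by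
  intro A D B U V W calA calB calD v₁ v₂ _ hD hM _
  have hDsymm : D.IsSymm := orthotropicKelvin_isSymm T₀ T₁ R₀D R₁D
  have hBsymm : B.IsSymm := squareCoupling_isSymm R₀B
  have hcalA_symm : calA.IsSymm := by
    refine IsSymm.inv (IsSymm.sub (orthotropicKelvin_isSymm T₀ T₁ R₀A R₁A) (IsSymm.smul ?_ _))
    simp only [IsSymm, transpose_mul, hBsymm.eq, transpose_nonsing_inv, hDsymm.eq, Matrix.mul_assoc]
  have hv₁ : v₁ = (2 / h * -3) • (D⁻¹ *ᵥ (B *ᵥ (calA *ᵥ U))) := by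
    simp only [v₁, V, calB, mulVec_zero, smul_zero, add_zero, transpose_smul, transpose_mul,
      hcalA_symm.eq, hBsymm.eq, transpose_nonsing_inv, hDsymm.eq, smul_mulVec, mulVec_mulVec,
      smul_smul, Matrix.mul_assoc]
  have hv₂ : v₂ = (h / 6 * -3) • (calA *ᵥ (B *ᵥ (D⁻¹ *ᵥ W))) := by
    simp only [v₂, V, calB, mulVec_zero, smul_zero, zero_add, smul_mulVec, mulVec_mulVec, smul_smul,
      Matrix.mul_assoc]
  have : Invertible D := invertibleOfIsUnitDet D hD
  have : Invertible (A - (3 : ℝ) • (B * D⁻¹ * B)) := invertibleOfIsUnitDet _ hM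
  have hDinv : D⁻¹.BlockTriangular shearBlock :=
    blockTriangular_inv_of_blockTriangular (orthotropicKelvin_blockTriangular T₀ T₁ R₀D R₁D)
  have hB : B.BlockTriangular shearBlock := squareCoupling_blockTriangular R₀B
  have hcalA_block : calA.BlockTriangular shearBlock :=
    blockTriangular_inv_of_blockTriangular <| (orthotropicKelvin_blockTriangular T₀ T₁ R₀A R₁A).sub
      (((hB.mul hDinv).mul hB).smul _)
  refine ⟨?_, ?_, ?_, ?_⟩
  · rw [hv₁, Pi.smul_apply, hDinv.mulVec_apply_two_eq_zero (hB.mulVec_apply_two_eq_zero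
      (hcalA_block.mulVec_apply_two_eq_zero rfl)), smul_zero]
  · rw [hv₂, Pi.smul_apply, hcalA_block.mulVec_apply_two_eq_zero (hB.mulVec_apply_two_eq_zero
      (hDinv.mulVec_apply_two_eq_zero rfl)), smul_zero]
  · rw [hv₁]
    exact (hasPhaseRatio_inv_mulVec_squareCoupling_mulVec hD R₀B _).smul _
  · rw [hv₂]
    exact (hasPhaseRatio_schurComplement_inv_mulVec_squareCoupling_mulVec hM _).smul _

theorem anisotropic_to_isotropic_phase_ratios
    (T₀ T₁ R₀A R₁A R₀B R₀D R₁D Tγ ρ : ℝ) (h : ℝ) (hh : 0 < h)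
    (ε : ℝ) (hε : ε = -1 ∨ ε = 1) :
    let A : Matrix (Fin 3) (Fin 3) ℝ :=
      !![T₀ + 2*T₁ + R₀A + 4*R₁A, -T₀ + 2*T₁ - R₀A, 0;
         -T₀ + 2*T₁ - R₀A, T₀ + 2*T₁ + R₀A - 4*R₁A, 0;
         0, 0, 2*(T₀ - R₀A)]
    let D : Matrix (Fin 3) (Fin 3) ℝ :=
      !![T₀ + 2*T₁ + R₀D + 4*R₁D, -T₀ + 2*T₁ - R₀D, 0;
         -T₀ + 2*T₁ - R₀D, T₀ + 2*T₁ + R₀D - 4*R₁D, 0;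
         0, 0, 2*(T₀ - R₀D)]
    let B : Matrix (Fin 3) (Fin 3) ℝ :=
      !![R₀B, -R₀B, 0; -R₀B, R₀B, 0; 0, 0, -2*R₀B]
    let U : Fin 3 → ℝ := ![Tγ + ε * ρ * R₁A, Tγ - ε * ρ * R₁A, 0]
    let V : Fin 3 → ℝ := 0
    let W : Fin 3 → ℝ := ![Tγ + ε * ρ * R₁D, Tγ - ε * ρ * R₁D, 0]
    let calA := (A - (3 : ℝ) • (B * D⁻¹ * B))⁻¹
    let calB := (-3 : ℝ) • (calA * B * D⁻¹)
    let calD := (D - (3 : ℝ) • (B * A⁻¹ * B))⁻¹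
    let v₁ := (2 / h) • (calB.transpose.mulVec U + (3 : ℝ) • calD.mulVec V)
    let v₂ := (h / 6) • ((3 : ℝ) • calA.mulVec V + calB.mulVec W)
    IsUnit A.det → IsUnit D.det →
    IsUnit (A - (3 : ℝ) • (B * D⁻¹ * B)).det →
    IsUnit (D - (3 : ℝ) • (B * A⁻¹ * B)).det →
      (v₁ 2 = 0 ∧ v₂ 2 = 0 ∧
        R₁D ^ 2 * (v₁ 0 - v₁ 1) ^ 2 = T₁ ^ 2 * (v₁ 0 + v₁ 1) ^ 2 ∧
        R₁A ^ 2 * (v₂ 0 - v₂ 1) ^ 2 = T₁ ^ 2 * (v₂ 0 + v₂ 1) ^ 2) :=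
  anisotropic_to_isotropic_phase_ratios_general T₀ T₁ R₀A R₁A R₀B R₀D R₁D Tγ ρ h ε
end
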